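/- arXiv:1704.07112 — 2 statements merged into one kernel-verified Lean document; each statement's English description precedes it below -/
import Mathlib

section
/- Let (d_1,...,d_n) be a tree degree sequence with n ≥ 3 and i ≠ j. If T is a uniformly random labeled tree with this degree sequence, then the probability that v_i and v_j are adjacent in T equals (d_i + d_j − 2)/(n − 2). -/
/-- `G` realizes the degree sequence `d`: vertex `v` has degree `d v`. -/
def realizes {n : ℕ} (G : SimpleGraph (Fin n)) (d : Fin n → ℕ) : Prop :=
  ∀ v, {u | G.Adj v u}.ncard = d v

/-- A tree degree sequence: positive entries summing to `2n - 2`. -/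
def isTreeSeq {n : ℕ} (d : Fin n → ℕ) : Prop :=
  (∀ i, 1 ≤ d i) ∧ (∑ i, d i) = 2 * n - 2

/-- A caterpillar: a tree whose non-leaf vertices span a path. -/
def isCaterpillar {n : ℕ} (T : SimpleGraph (Fin n)) : Prop :=
  T.IsTree ∧ ∃ p : List (Fin n), p.Nodup ∧ p.Chain' T.Adj ∧
    ∀ v, (1 < {u | T.Adj v u}.ncard ↔ v ∈ p)

/-!
Deleting a leaf `k` with neighbour `u` is a bijection from the trees with degree sequence `d`
and edge `ku` onto the trees on the other vertices with degree sequence `d - e_k - e_u`. Summing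
over `u` and inducting, the number `N` of trees with degree sequence `d` satisfies
`N * ∏ (d v - 1)! = (n - 2)!`, the multinomial count also given by Prüfer codes. Choosing the
leaf outside `{i, j}` (possible unless `i` or `j` is itself a leaf, when the edge `ij` is forced
and the first count applies), the number `A` of those trees containing `ij` satisfies
`A * ∏ (d v - 1)! = (n - 3)! * (d i + d j - 2)`. Dividing gives `A / N = (d i + d j - 2) / (n - 2)`.
-/

open Finset
open scoped Nat

namespace SimpleGraph

variable {V : Type*} {G H : SimpleGraph V} {s : Finset V} {k u v : V}

/-- Trees on subsets of one fixed vertex type, all other vertices isolated, so that deleting a leaf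
stays inside `SimpleGraph V`. -/
structure IsTreeOn (G : SimpleGraph V) (s : Finset V) : Prop where
  isAcyclic : G.IsAcyclic
  reachable : ∀ ⦃v⦄, v ∈ s → ∀ ⦃w⦄, w ∈ s → G.Reachable v w
  mem_of_adj : ∀ ⦃v w⦄, G.Adj v w → v ∈ s

lemma isTreeOn_univ_iff [Fintype V] [Nonempty V] : G.IsTreeOn univ ↔ G.IsTree := by
  refine ⟨fun h => ⟨⟨fun v w => h.reachable (mem_univ v) (mem_univ w)⟩, h.isAcyclic⟩,
    fun h => ⟨h.isAcyclic, fun v _ w _ => h.connected v w, fun v _ _ => mem_univ v⟩⟩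

lemma IsTreeOn.not_reachable (hG : G.IsTreeOn s) (hk : k ∉ s) (hku : k ≠ u) :
    ¬ G.Reachable k u := by
  rintro ⟨p⟩
  cases p with
  | nil => exact hku rfl
  | cons h _ => exact hk (hG.mem_of_adj h)

/-- Degrees through `ncard`, as in `realizes`, so that no `Fintype` instances are needed. -/
noncomputable def degrees (G : SimpleGraph V) : V → ℕ := fun v => (G.neighborSet v).ncard

lemma degrees_sup [Finite V] (h : Disjoint G H) : (G ⊔ H).degrees = G.degrees + H.degrees := by
  funext v
  exact Set.ncard_union_eq (disjoint_neighborSet.mpr h v)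

lemma degrees_edge_left (hku : k ≠ u) : (edge k u).degrees k = 1 := by
  have : (edge k u).neighborSet k = {u} := by
    ext x; simp only [mem_neighborSet, edge_adj]; grind
  simp [degrees, this]

lemma degrees_edge_right (hku : k ≠ u) : (edge k u).degrees u = 1 :=
  edge_comm k u ▸ degrees_edge_left hku.symm

lemma degrees_edge_of_ne (hvk : v ≠ k) (hvu : v ≠ u) : (edge k u).degrees v = 0 := by
  have : (edge k u).neighborSet v = ∅ := by ext x; simp [edge_adj, hvk, hvu]
  simp [degrees, this]

lemma neighborSet_eq_singleton (hG : G.degrees k = 1) (h : G.Adj k u) :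
    G.neighborSet k = {u} := by
  obtain ⟨a, ha⟩ := Set.ncard_eq_one.mp hG
  have hu : u ∈ G.neighborSet k := h
  rw [ha, Set.mem_singleton_iff] at hu
  rw [ha, hu]

variable [DecidableEq V]

lemma IsTreeOn.sdiff_edge (hG : G.IsTreeOn s) (hk : G.neighborSet k = {u}) :
    (G \ edge k u).IsTreeOn (s.erase k) where
  isAcyclic := hG.isAcyclic.anti sdiff_le
  reachable v hv w hw := by
    obtain ⟨p, hp⟩ := (hG.reachable (mem_of_mem_erase hv) (mem_of_mem_erase hw)).exists_isPath
    have hkp : k ∉ p.support := hp.isTrail.not_mem_support_of_subsingleton_neighborSet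
      (ne_of_mem_erase hv).symm (ne_of_mem_erase hw).symm (hk ▸ Set.subsingleton_singleton)
    refine ⟨p.transfer _ fun e he => ?_⟩
    rw [edgeSet_sdiff]
    refine ⟨p.edges_subset_edgeSet he, fun hke => ?_⟩
    obtain rfl := edgeSet_edge_subset hke
    exact hkp (p.fst_mem_support_of_mem_edges he)
  mem_of_adj v w h := by
    refine mem_erase.mpr ⟨?_, hG.mem_of_adj h.1⟩
    rintro rfl
    have hw : w ∈ G.neighborSet v := h.1
    rw [hk, Set.mem_singleton_iff] at hw
    exact h.2 ((edge_adj _ _ _ _).mpr ⟨Or.inl ⟨rfl, hw⟩, h.1.ne⟩)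

lemma IsTreeOn.sup_edge (hG : G.IsTreeOn (s.erase k)) (hk : k ∈ s) (hu : u ∈ s.erase k) :
    (G ⊔ edge k u).IsTreeOn s where
  isAcyclic := hG.isAcyclic.sup_edge_of_not_reachable
    (hG.not_reachable (notMem_erase k s) (ne_of_mem_erase hu).symm)
  reachable := by
    have hku : (G ⊔ edge k u).Adj k u :=
      Or.inr ((edge_adj _ _ _ _).mpr ⟨Or.inl ⟨rfl, rfl⟩, (ne_of_mem_erase hu).symm⟩)
    have hreach : ∀ z ∈ s, (G ⊔ edge k u).Reachable z u := by
      intro z hz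
      by_cases hzk : z = k
      · exact hzk ▸ hku.reachable
      · exact (hG.reachable (mem_erase.mpr ⟨hzk, hz⟩) hu).mono le_sup_left
    exact fun v hv w hw => (hreach v hv).trans (hreach w hw).symm
  mem_of_adj v w h := by
    rcases h with h | h
    · exact mem_of_mem_erase (hG.mem_of_adj h)
    · rcases ((edge_adj _ _ _ _).mp h).1 with ⟨rfl, -⟩ | ⟨rfl, -⟩
      · exact hk
      · exact mem_of_mem_erase hu

end SimpleGraph

structure IsTreeDegreeSeqOn {V : Type*} (s : Finset V) (d : V → ℕ) : Prop where
  pos : ∀ v ∈ s, 1 ≤ d v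
  eq_zero : ∀ v ∉ s, d v = 0
  sum_eq : ∑ v ∈ s, d v = 2 * #s - 2

namespace IsTreeDegreeSeqOn

open SimpleGraph

variable {V : Type*} {s : Finset V} {d : V → ℕ} {k u : V}

lemma sum_sub_one (hd : IsTreeDegreeSeqOn s d) : ∑ v ∈ s, (d v - 1) = #s - 2 := by
  have h : ∑ v ∈ s, (d v - 1) + #s = ∑ v ∈ s, d v := by
    rw [card_eq_sum_ones, ← sum_add_distrib]
    exact sum_congr rfl fun v hv => Nat.sub_add_cancel (hd.pos v hv)
  have := hd.sum_eq
  omega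

lemma exists_eq_one (hd : IsTreeDegreeSeqOn s d) (hs : s.Nonempty) : ∃ k ∈ s, d k = 1 := by
  by_contra! h
  have hle : ∑ _v ∈ s, 1 ≤ ∑ v ∈ s, (d v - 1) :=
    sum_le_sum fun v hv => by have := hd.pos v hv; have := h v hv; omega
  have := hd.sum_sub_one
  have := hs.card_pos
  rw [← card_eq_sum_ones] at hle
  omega

lemma sub_one_add_sub_one_le (hd : IsTreeDegreeSeqOn s d) {i j : V} (hi : i ∈ s) (hj : j ∈ s)
    (hij : i ≠ j) : d i - 1 + (d j - 1) ≤ #s - 2 := by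
  classical
  rw [← hd.sum_sub_one, ← sum_pair (f := fun v => d v - 1) hij]
  exact sum_le_sum_of_subset (insert_subset hi (singleton_subset_iff.mpr hj))

lemma sub_degrees_edge [DecidableEq V] (hd : IsTreeDegreeSeqOn s d) (hk : k ∈ s) (hdk : d k = 1)
    (hu : u ∈ s.erase k) (hdu : 2 ≤ d u) :
    IsTreeDegreeSeqOn (s.erase k) (d - (edge k u).degrees) where
  pos v hv := by
    have := hd.pos v (mem_of_mem_erase hv)
    by_cases hvu : v = u
    · subst hvu; simp [degrees_edge_right (ne_of_mem_erase hv).symm]; omega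
    · simp [degrees_edge_of_ne (ne_of_mem_erase hv) hvu, this]
  eq_zero v hv := by
    by_cases hvk : v = k
    · subst hvk; simp [degrees_edge_left (ne_of_mem_erase hu).symm, hdk]
    · simp [hd.eq_zero v fun hvs => hv (mem_erase.mpr ⟨hvk, hvs⟩)]
  sum_eq := by
    have hrest : ∑ v ∈ (s.erase k).erase u, (d - (edge k u).degrees) v
        = ∑ v ∈ (s.erase k).erase u, d v :=
      sum_congr rfl fun v hv => by
        simp [degrees_edge_of_ne (ne_of_mem_erase (mem_of_mem_erase hv)) (ne_of_mem_erase hv)]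
    rw [← add_sum_erase _ _ hu, hrest, Pi.sub_apply, degrees_edge_right (ne_of_mem_erase hu).symm,
      card_erase_of_mem hk]
    have := hd.sum_eq
    rw [← add_sum_erase _ _ hk, ← add_sum_erase _ _ hu] at this
    have := card_pos.mpr ⟨k, hk⟩
    omega

end IsTreeDegreeSeqOn

namespace SimpleGraph

variable {V : Type*} {s : Finset V} {d : V → ℕ} {i j k u : V} {S : Set (SimpleGraph V)}

lemma prod_factorial_eq_mul [DecidableEq V] (hk : k ∈ s) (hdk : d k = 1) (hu : u ∈ s.erase k)
    (hdu : 2 ≤ d u) :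
    ∏ v ∈ s, (d v - 1)! = (d u - 1) * ∏ v ∈ s.erase k, ((d - (edge k u).degrees) v - 1)! := by
  have hrest : ∏ v ∈ (s.erase k).erase u, ((d - (edge k u).degrees) v - 1)!
      = ∏ v ∈ (s.erase k).erase u, (d v - 1)! :=
    prod_congr rfl fun v hv => by
      simp [degrees_edge_of_ne (ne_of_mem_erase (mem_of_mem_erase hv)) (ne_of_mem_erase hv)]
  rw [← mul_prod_erase s _ hk, hdk, ← mul_prod_erase (s.erase k) _ hu,
    ← mul_prod_erase (s.erase k) _ hu, hrest, Pi.sub_apply,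
    degrees_edge_right (ne_of_mem_erase hu).symm, ← mul_assoc (d u - 1),
    Nat.mul_factorial_pred (by omega)]
  simp

/-- Deleting a leaf `k ∉ {i, j}` hanging on `u` lowers `d i + d j - 2` by one exactly when
`u ∈ {i, j}`. -/
lemma sum_mul_sub_degrees_edge [DecidableEq V] (hd : IsTreeDegreeSeqOn s d) (hdk : d k = 1)
    (hi : i ∈ s) (hj : j ∈ s) (hij : i ≠ j) (hdi : 2 ≤ d i) (hdj : 2 ≤ d j) :
    ∑ u ∈ s.erase k, (d u - 1) * ((d - (edge k u).degrees) i + (d - (edge k u).degrees) j - 2)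
      = (#s - 3) * (d i + d j - 2) := by
  have hki : k ≠ i := by rintro rfl; omega
  have hkj : k ≠ j := by rintro rfl; omega
  have hterm : ∀ u ∈ s.erase k,
      (d u - 1) * ((d - (edge k u).degrees) i + (d - (edge k u).degrees) j - 2)
        + ((if u = i then d i - 1 else 0) + (if u = j then d j - 1 else 0))
        = (d u - 1) * (d i + d j - 2) := by
    intro u hu
    obtain ⟨a, ha⟩ : ∃ a, d i = a + 2 := ⟨d i - 2, by omega⟩
    obtain ⟨b, hb⟩ : ∃ b, d j = b + 2 := ⟨d j - 2, by omega⟩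
    by_cases hui : u = i
    · subst hui
      simp [degrees_edge_right hki, degrees_edge_of_ne (Ne.symm hkj) (Ne.symm hij), hij, ha, hb]
      grind
    by_cases huj : u = j
    · subst huj
      simp [degrees_edge_right hkj, degrees_edge_of_ne (Ne.symm hki) hij, hui, ha, hb]
      grind
    · simp [degrees_edge_of_ne (Ne.symm hki) (Ne.symm hui),
        degrees_edge_of_ne (Ne.symm hkj) (Ne.symm huj), hui, huj]
  have hsum := sum_congr rfl hterm
  rw [sum_add_distrib, sum_add_distrib, sum_ite_eq', sum_ite_eq',
    if_pos (mem_erase.mpr ⟨hki.symm, hi⟩), if_pos (mem_erase.mpr ⟨hkj.symm, hj⟩), ← sum_mul,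
    sum_erase (f := fun u => d u - 1) s (by simp [hdk]),
    hd.sum_sub_one] at hsum
  have hle := hd.sub_one_add_sub_one_le hi hj hij
  rw [show #s - 2 = #s - 3 + 1 by omega, add_one_mul] at hsum
  omega

def treesWithDegrees (s : Finset V) (d : V → ℕ) : Set (SimpleGraph V) :=
  {G | G.IsTreeOn s ∧ G.degrees = d}

lemma treesWithDegrees_singleton (v : V) : treesWithDegrees {v} 0 = {⊥} := by
  ext G
  simp only [treesWithDegrees, Set.mem_ofPred_eq, Set.mem_singleton_iff]
  constructor
  · rintro ⟨hG, -⟩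
    ext a b
    refine iff_of_false (fun h => h.ne ?_) id
    have ha := hG.mem_of_adj h
    have hb := hG.mem_of_adj h.symm
    rw [mem_singleton] at ha hb
    rw [ha, hb]
  · rintro rfl
    refine ⟨⟨isAcyclic_bot, ?_, fun _ _ h => h.elim⟩, by funext; simp [degrees]⟩
    intro a ha b hb
    rw [mem_singleton] at ha hb
    rw [ha, hb]

lemma treesWithDegrees_eq_empty [Finite V] (hs : 2 ≤ #s) {v : V} (hv : v ∈ s) (hdv : d v = 0) :
    treesWithDegrees s d = ∅ := by
  refine Set.eq_empty_of_forall_notMem ?_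
  rintro G ⟨hG, rfl⟩
  obtain ⟨w, hw, hwv⟩ := exists_mem_ne hs v
  obtain ⟨p⟩ := hG.reachable hv hw
  exact ((Set.ncard_pos (Set.toFinite _)).mpr ⟨_, p.adj_snd (Walk.not_nil_of_ne hwv.symm)⟩).ne' hdv

variable [Finite V] [DecidableEq V]

lemma ncard_treesWithDegrees_inter_adj (hS : ∀ H, H ⊔ edge k u ∈ S ↔ H ∈ S) (hk : k ∈ s)
    (hu : u ∈ s.erase k) (hdk : d k = 1) (hdu : 1 ≤ d u) :
    (treesWithDegrees s d ∩ {G | G.Adj k u} ∩ S).ncard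
      = (treesWithDegrees (s.erase k) (d - (edge k u).degrees) ∩ S).ncard := by
  have hku : k ≠ u := (ne_of_mem_erase hu).symm
  have hnadj : ∀ H ∈ treesWithDegrees (s.erase k) (d - (edge k u).degrees) ∩ S, ¬ H.Adj k u :=
    fun H hH h => notMem_erase k s (hH.1.1.mem_of_adj h)
  have hadd : d - (edge k u).degrees + (edge k u).degrees = d := by
    funext v
    by_cases hvk : v = k
    · subst hvk; simp [degrees_edge_left hku, hdk]
    by_cases hvu : v = u
    · subst hvu; simp [degrees_edge_right hku]; omega
    · simp [degrees_edge_of_ne hvk hvu]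
  have hinj :
      Set.InjOn (· ⊔ edge k u) (treesWithDegrees (s.erase k) (d - (edge k u).degrees) ∩ S) := by
    intro H₁ h₁ H₂ h₂ h
    dsimp only at h
    rw [← ((disjoint_edge H₁).mpr (hnadj H₁ h₁)).sdiff_eq_left, ← sup_sdiff_right_self, h,
      sup_sdiff_right_self, ((disjoint_edge H₂).mpr (hnadj H₂ h₂)).sdiff_eq_left]
  rw [← hinj.ncard_image]
  congr 1
  ext G
  constructor
  · rintro ⟨⟨⟨hG, rfl⟩, hGku⟩, hGS⟩
    have hdisj : Disjoint (G \ edge k u) (edge k u) := disjoint_sdiff_self_left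
    have hsup : G \ edge k u ⊔ edge k u = G := sdiff_sup_cancel ((edge_le_iff G).mpr (Or.inr hGku))
    refine ⟨G \ edge k u, ⟨⟨hG.sdiff_edge (neighborSet_eq_singleton hdk hGku), ?_⟩,
      (hS _).mp (by rwa [hsup])⟩, hsup⟩
    conv_rhs => rw [← hsup, degrees_sup hdisj]
    simp
  · rintro ⟨H, hH, rfl⟩
    refine ⟨⟨⟨hH.1.1.sup_edge hk hu, ?_⟩, Or.inr ((edge_adj _ _ _ _).mpr ⟨Or.inl ⟨rfl, rfl⟩, hku⟩)⟩,
      (hS H).mpr hH.2⟩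
    rw [degrees_sup ((disjoint_edge H).mpr (hnadj H hH)), hH.1.2, hadd]

lemma ncard_treesWithDegrees_inter_eq_sum (hS : ∀ u ∈ s.erase k, ∀ H, H ⊔ edge k u ∈ S ↔ H ∈ S)
    (hd : ∀ v ∈ s, 1 ≤ d v) (hk : k ∈ s) (hdk : d k = 1) :
    (treesWithDegrees s d ∩ S).ncard
      = ∑ u ∈ s.erase k, (treesWithDegrees (s.erase k) (d - (edge k u).degrees) ∩ S).ncard := by
  have hunion : treesWithDegrees s d ∩ S
      = ⋃ u ∈ (s.erase k : Set V), treesWithDegrees s d ∩ {G | G.Adj k u} ∩ S := by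
    ext G
    simp only [Set.mem_iUnion, Set.mem_inter_iff, Set.mem_ofPred_eq, exists_prop, coe_erase,
      Set.mem_sdiff, Set.mem_singleton_iff, mem_coe]
    constructor
    · rintro ⟨hG, hGS⟩
      obtain ⟨u, hu⟩ := Set.ncard_eq_one.mp (hG.2 ▸ hdk)
      have hku : G.Adj k u := by simp [← mem_neighborSet, hu]
      exact ⟨u, ⟨hG.1.mem_of_adj hku.symm, hku.ne'⟩, ⟨hG, hku⟩, hGS⟩
    · rintro ⟨u, -, ⟨hG, -⟩, hGS⟩
      exact ⟨hG, hGS⟩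
  have hdisj : (s.erase k : Set V).PairwiseDisjoint
      fun u => treesWithDegrees s d ∩ {G | G.Adj k u} ∩ S := by
    intro a _ b _ hab
    refine Set.disjoint_left.mpr fun G ⟨⟨hG, hGa⟩, _⟩ ⟨⟨_, hGb⟩, _⟩ => hab ?_
    have hb : b ∈ G.neighborSet k := hGb
    rw [neighborSet_eq_singleton (hG.2 ▸ hdk) hGa, Set.mem_singleton_iff] at hb
    exact hb.symm
  rw [hunion, Set.Finite.ncard_biUnion (Set.toFinite _) (fun _ _ => Set.toFinite _) hdisj,
    finsum_mem_coe_finset]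
  exact sum_congr rfl fun u hu =>
    ncard_treesWithDegrees_inter_adj (hS u hu) hk hu hdk (hd u (mem_of_mem_erase hu))

/-- The number of trees in `S` with degrees `d`, multiplied by `∏ (d v - 1)!` so that the counting
formulas stay in `ℕ`. -/
noncomputable def weightedTreeCount (s : Finset V) (d : V → ℕ) (S : Set (SimpleGraph V)) : ℕ :=
  (treesWithDegrees s d ∩ S).ncard * ∏ v ∈ s, (d v - 1)!

lemma ncard_mul_prod_eq_mul_weightedTreeCount (hs : 3 ≤ #s) (hk : k ∈ s) (hdk : d k = 1)
    (hu : u ∈ s.erase k) (hdu : 1 ≤ d u) :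
    (treesWithDegrees (s.erase k) (d - (edge k u).degrees) ∩ S).ncard * ∏ v ∈ s, (d v - 1)!
      = (d u - 1) * weightedTreeCount (s.erase k) (d - (edge k u).degrees) S := by
  rcases hdu.eq_or_lt with hdu | hdu
  · have hzero : (d - (edge k u).degrees) u = 0 := by
      simp [degrees_edge_right (ne_of_mem_erase hu).symm, ← hdu]
    rw [treesWithDegrees_eq_empty (by rw [card_erase_of_mem hk]; omega) hu hzero, ← hdu]
    simp
  · rw [prod_factorial_eq_mul hk hdk hu hdu, weightedTreeCount]
    ring

lemma weightedTreeCount_eq_sum (hd : IsTreeDegreeSeqOn s d) (hs : 3 ≤ #s) (hk : k ∈ s)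
    (hdk : d k = 1) (hS : ∀ u ∈ s.erase k, ∀ H, H ⊔ edge k u ∈ S ↔ H ∈ S) :
    weightedTreeCount s d S
      = ∑ u ∈ s.erase k, (d u - 1) * weightedTreeCount (s.erase k) (d - (edge k u).degrees) S := by
  rw [weightedTreeCount, ncard_treesWithDegrees_inter_eq_sum hS hd.pos hk hdk, sum_mul]
  exact sum_congr rfl fun u hu =>
    ncard_mul_prod_eq_mul_weightedTreeCount hs hk hdk hu (hd.pos u (mem_of_mem_erase hu))

lemma ncard_treesWithDegrees_of_card_eq_two (hd : IsTreeDegreeSeqOn s d) (hs : #s = 2) :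
    (treesWithDegrees s d).ncard = 1 := by
  obtain ⟨k, hk, hdk⟩ := hd.exists_eq_one (card_pos.mp (by omega))
  obtain ⟨u, hu⟩ := card_eq_one.mp (by rw [card_erase_of_mem hk, hs] : #(s.erase k) = 1)
  have hus : u ∈ s.erase k := hu ▸ mem_singleton_self u
  have hdu : d u = 1 := by
    have := sum_eq_zero_iff.mp (hd.sum_sub_one.trans (by omega)) u (mem_of_mem_erase hus)
    have := hd.pos u (mem_of_mem_erase hus)
    omega
  have hzero : d - (edge k u).degrees = 0 := by
    funext v
    by_cases hvk : v = k
    · subst hvk; simp [degrees_edge_left (ne_of_mem_erase hus).symm, hdk]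
    by_cases hvu : v = u
    · subst hvu; simp [degrees_edge_right (ne_of_mem_erase hus).symm, hdu]
    · have hvs : v ∉ s := fun hvs => hvu (mem_singleton.mp (hu ▸ mem_erase.mpr ⟨hvk, hvs⟩))
      simp [hd.eq_zero v hvs]
  have := ncard_treesWithDegrees_inter_eq_sum (S := Set.univ) (fun _ _ _ => Iff.rfl) hd.pos hk hdk
  rw [Set.inter_univ] at this
  simp [this, hu, hzero, treesWithDegrees_singleton]

theorem weightedTreeCount_univ (hd : IsTreeDegreeSeqOn s d) (hs : 2 ≤ #s) :
    weightedTreeCount s d Set.univ = (#s - 2)! := by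
  induction s using Finset.strongInduction generalizing d with
  | H s ih =>
  obtain ⟨k, hk, hdk⟩ := hd.exists_eq_one (card_pos.mp (by omega))
  rcases hs.eq_or_lt with hs2 | hs3
  · have hprod : ∏ v ∈ s, (d v - 1)! = 1 := prod_eq_one fun v hv => by
      rw [sum_eq_zero_iff.mp (hd.sum_sub_one.trans (by omega)) v hv, Nat.factorial_zero]
    rw [weightedTreeCount, Set.inter_univ, ncard_treesWithDegrees_of_card_eq_two hd hs2.symm, hprod,
      ← hs2]
    rfl
  have hterm : ∀ u ∈ s.erase k, (d u - 1) * weightedTreeCount (s.erase k)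
      (d - (edge k u).degrees) Set.univ = (d u - 1) * (#s - 3)! := by
    intro u hu
    rcases (hd.pos u (mem_of_mem_erase hu)).eq_or_lt with hdu | hdu
    · simp [← hdu]
    · rw [ih _ (erase_ssubset hk) (hd.sub_degrees_edge hk hdk hu hdu)
        (by rw [card_erase_of_mem hk]; omega), card_erase_of_mem hk, Nat.sub_sub]
  rw [weightedTreeCount_eq_sum hd hs3 hk hdk (fun _ _ _ => Iff.rfl), sum_congr rfl hterm, ← sum_mul,
    sum_erase _ (by simp [hdk]), hd.sum_sub_one, show #s - 3 = #s - 2 - 1 by omega,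
    Nat.mul_factorial_pred (by omega)]

lemma weightedTreeCount_adj_of_eq_one (hd : IsTreeDegreeSeqOn s d) (hs : 3 ≤ #s) (hi : i ∈ s)
    (hj : j ∈ s) (hij : i ≠ j) (hdi : d i = 1) :
    weightedTreeCount s d {G | G.Adj i j} = (#s - 3)! * (d i + d j - 2) := by
  have hj' : j ∈ s.erase i := mem_erase.mpr ⟨hij.symm, hj⟩
  rw [weightedTreeCount, ← Set.inter_univ (_ ∩ _),
    ncard_treesWithDegrees_inter_adj (fun _ => Iff.rfl) hi hj' hdi (hd.pos j hj),
    ncard_mul_prod_eq_mul_weightedTreeCount hs hi hdi hj' (hd.pos j hj), hdi]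
  rcases (hd.pos j hj).eq_or_lt with hdj | hdj
  · simp [← hdj]
  · rw [weightedTreeCount_univ (hd.sub_degrees_edge hi hdi hj' hdj)
      (by rw [card_erase_of_mem hi]; omega), card_erase_of_mem hi, Nat.sub_sub,
      show 1 + d j - 2 = d j - 1 by omega, mul_comm]

theorem weightedTreeCount_adj (hd : IsTreeDegreeSeqOn s d) (hs : 3 ≤ #s) (hi : i ∈ s) (hj : j ∈ s)
    (hij : i ≠ j) : weightedTreeCount s d {G | G.Adj i j} = (#s - 3)! * (d i + d j - 2) := by
  induction s using Finset.strongInduction generalizing d with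
  | H s ih =>
  by_cases hdi : d i = 1
  · exact weightedTreeCount_adj_of_eq_one hd hs hi hj hij hdi
  by_cases hdj : d j = 1
  · rw [show {G : SimpleGraph V | G.Adj i j} = {G | G.Adj j i} from Set.ext fun G => G.adj_comm i j,
      weightedTreeCount_adj_of_eq_one hd hs hj hi hij.symm hdj, add_comm (d j)]
  replace hdi : 2 ≤ d i := by have := hd.pos i hi; omega
  replace hdj : 2 ≤ d j := by have := hd.pos j hj; omega
  obtain ⟨k, hk, hdk⟩ := hd.exists_eq_one ⟨i, hi⟩
  have hki : k ≠ i := by rintro rfl; omega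
  have hkj : k ≠ j := by rintro rfl; omega
  have hs4 : 4 ≤ #s := by have := hd.sub_one_add_sub_one_le hi hj hij; omega
  have hS : ∀ u ∈ s.erase k, ∀ H : SimpleGraph V, (H ⊔ edge k u).Adj i j ↔ H.Adj i j := by
    intro u _ H
    simp [edge_adj, hki.symm, hkj.symm]
  have hterm : ∀ u ∈ s.erase k, (d u - 1) * weightedTreeCount (s.erase k)
      (d - (edge k u).degrees) {G | G.Adj i j} = (#s - 4)! *
        ((d u - 1) * ((d - (edge k u).degrees) i + (d - (edge k u).degrees) j - 2)) := by
    intro u hu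
    rcases (hd.pos u (mem_of_mem_erase hu)).eq_or_lt with hdu | hdu
    · simp [← hdu]
    · rw [ih _ (erase_ssubset hk) (hd.sub_degrees_edge hk hdk hu hdu)
        (by rw [card_erase_of_mem hk]; omega) (mem_erase.mpr ⟨hki.symm, hi⟩)
        (mem_erase.mpr ⟨hkj.symm, hj⟩), card_erase_of_mem hk, Nat.sub_sub]
      ring
  rw [weightedTreeCount_eq_sum hd hs hk hdk hS, sum_congr rfl hterm, ← mul_sum,
    sum_mul_sub_degrees_edge hd hdk hi hj hij hdi hdj, ← mul_assoc,
    show #s - 4 = #s - 3 - 1 by omega, mul_comm _ (#s - 3), Nat.mul_factorial_pred (by omega)]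

lemma ncard_treesWithDegrees_pos (hd : IsTreeDegreeSeqOn s d) (hs : 2 ≤ #s) :
    0 < (treesWithDegrees s d).ncard := by
  have h := weightedTreeCount_univ hd hs
  rw [weightedTreeCount, Set.inter_univ] at h
  exact Nat.pos_of_ne_zero fun h0 => (Nat.factorial_ne_zero _) (by rw [← h, h0, zero_mul])

lemma ncard_treesWithDegrees_adj_mul (hd : IsTreeDegreeSeqOn s d) (hs : 3 ≤ #s) (hi : i ∈ s)
    (hj : j ∈ s) (hij : i ≠ j) :
    (treesWithDegrees s d ∩ {G | G.Adj i j}).ncard * (#s - 2)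
      = (treesWithDegrees s d).ncard * (d i + d j - 2) := by
  have hadj := weightedTreeCount_adj hd hs hi hj hij
  have hall := weightedTreeCount_univ hd (by omega)
  rw [weightedTreeCount] at hadj hall
  rw [Set.inter_univ] at hall
  refine Nat.eq_of_mul_eq_mul_right (prod_pos (s := s) fun v _ => Nat.factorial_pos (d v - 1)) ?_
  calc _ = (#s - 2) * (#s - 2 - 1)! * (d i + d j - 2) := by
        rw [mul_right_comm, hadj, show #s - 2 - 1 = #s - 3 by omega]; ring
    _ = _ := by rw [Nat.mul_factorial_pred (by omega), ← hall]; ring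

end SimpleGraph

open SimpleGraph in
theorem prob_adjacent_in_random_tree (n : ℕ) (hn : 3 ≤ n) (d : Fin n → ℕ)
    (hd : isTreeSeq d) (i j : Fin n) (hij : i ≠ j) :
    ({T : SimpleGraph (Fin n) | T.IsTree ∧ realizes T d ∧ T.Adj i j}.ncard : ℚ) /
        ({T : SimpleGraph (Fin n) | T.IsTree ∧ realizes T d}.ncard : ℚ) =
      ((d i : ℚ) + (d j : ℚ) - 2) / ((n : ℚ) - 2) := by
  have : Nonempty (Fin n) := ⟨i⟩
  have hmem : ∀ T : SimpleGraph (Fin n), T ∈ treesWithDegrees univ d ↔ T.IsTree ∧ realizes T d :=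
    fun T => by rw [treesWithDegrees, Set.mem_ofPred_eq, isTreeOn_univ_iff, funext_iff]; rfl
  have hseq : IsTreeDegreeSeqOn univ d :=
    ⟨fun v _ => hd.1 v, fun v hv => absurd (mem_univ v) hv, by simpa using hd.2⟩
  have hcard : #(univ : Finset (Fin n)) = n := card_fin n
  have hall : {T | T.IsTree ∧ realizes T d} = treesWithDegrees univ d :=
    Set.ext fun T => (hmem T).symm
  have hadj :
      {T | T.IsTree ∧ realizes T d ∧ T.Adj i j} = treesWithDegrees univ d ∩ {G | G.Adj i j} :=
    Set.ext fun T => by rw [Set.mem_inter_iff, hmem]; exact and_assoc.symm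
  have hkey := ncard_treesWithDegrees_adj_mul hseq (by rw [hcard]; exact hn) (mem_univ i)
    (mem_univ j) hij
  have hpos := ncard_treesWithDegrees_pos hseq (by rw [hcard]; omega)
  rw [hall, hadj, div_eq_div_iff (by positivity) (by rw [sub_ne_zero]; norm_cast; omega)]
  rw [hcard] at hkey
  have h2 : 2 ≤ d i + d j := by have := hd.1 i; have := hd.1 j; omega
  have hkeyQ := congrArg (Nat.cast : ℕ → ℚ) hkey
  rw [Nat.cast_mul, Nat.cast_mul, Nat.cast_sub (by omega), Nat.cast_sub h2] at hkeyQ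
  push_cast at hkeyQ
  linarith
end

section
/- Let D = (d_1,...,d_n) and F = (f_1,...,f_n) be tree degree sequences with min(d_i,f_i) = 1 for all i and neither containing the value n − 1. Choose indices i_1 ≠ i_2 with d_{i_1}, d_{i_2} > 1 and j_1 ≠ j_2 with f_{j_1}, f_{j_2} > 1. Then the number of pairs (T_1, T_2) of labeled trees, with T_1 realizing D, T_2 realizing F, both containing the edges {v_{i_1}, v_{j_1}} and {v_{i_2}, v_{j_2}}, is at least [(n−4)! / ((d_{i_1}−2)!(d_{i_2}−2)! ∏_{k≠i_1,i_2}(d_k−1)!)] · [(n−4)! / ((f_{j_1}−2)!(f_{j_2}−2)! ∏_{k≠j_1,j_2}(f_k−1)!)]. -/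
open Function

namespace SimpleGraph

variable {V : Type*} {v u : V} {G : SimpleGraph {x // x ≠ v}}

def attachLeaf (v u : V) (G : SimpleGraph {x // x ≠ v}) : SimpleGraph V :=
  G.map (Embedding.subtype _) ⊔ edge v u

@[simp]
lemma attachLeaf_adj_val {a b : {x // x ≠ v}} : (attachLeaf v u G).Adj a b ↔ G.Adj a b := by
  rw [attachLeaf, sup_adj, ← Embedding.coe_subtype, map_adj_apply]
  simp [edge_adj, a.2, b.2]

lemma attachLeaf_adj_leaf_iff (huv : u ≠ v) {y : V} : (attachLeaf v u G).Adj v y ↔ y = u := by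
  simp only [attachLeaf, sup_adj, map_adj, edge_adj]
  aesop

lemma attachLeaf_injective : Injective (attachLeaf (V := V) v u) :=
  LeftInverse.injective fun G ↦ show (attachLeaf v u G).comap (Embedding.subtype _) = G by
    ext; simp

lemma card_edgeSet_attachLeaf [Finite V] (huv : u ≠ v) :
    Nat.card (attachLeaf v u G).edgeSet = Nat.card G.edgeSet + 1 := by
  have hnew : s(v, u) ∉ (Embedding.subtype (· ≠ v)).sym2Map '' G.edgeSet := by
    rintro ⟨e, -, he⟩
    have : v ∈ (Embedding.subtype (· ≠ v)).sym2Map e := he ▸ Sym2.mem_mk_left v u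
    simp at this
  have hdiag : ({s(v, u)} \ Sym2.diagSet : Set (Sym2 V)) = {s(v, u)} := by
    simpa using huv.symm
  rw [attachLeaf, edgeSet_sup, edgeSet_map, edgeSet_edge, hdiag, Set.union_singleton,
    Nat.card_coe_set_eq, Set.ncard_insert_of_notMem hnew,
    Set.ncard_image_of_injective _ (Embedding.injective _), Nat.card_coe_set_eq]

lemma Connected.attachLeaf (huv : u ≠ v) (hG : G.Connected) : (attachLeaf v u G).Connected := by
  let f : G →g SimpleGraph.attachLeaf v u G := ⟨Subtype.val, attachLeaf_adj_val.mpr⟩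
  refine (connected_iff_exists_forall_reachable _).mpr ⟨u, fun x ↦ ?_⟩
  by_cases hx : x = v
  · subst hx
    exact ((attachLeaf_adj_leaf_iff huv).mpr rfl).reachable.symm
  · exact (hG.preconnected ⟨u, huv⟩ ⟨x, hx⟩).map f

lemma IsTree.attachLeaf [Finite V] (huv : u ≠ v) (hG : G.IsTree) : (attachLeaf v u G).IsTree := by
  classical
  rw [isTree_iff_connected_and_card] at hG ⊢
  refine ⟨hG.1.attachLeaf huv, ?_⟩
  rw [card_edgeSet_attachLeaf huv, hG.2, ← Finite.card_option,
    Nat.card_congr (Equiv.optionSubtypeNe v)]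

lemma ncard_adj_attachLeaf_leaf (huv : u ≠ v) : {y | (attachLeaf v u G).Adj v y}.ncard = 1 := by
  simp [attachLeaf_adj_leaf_iff huv]

lemma ncard_adj_attachLeaf [Finite V] [DecidableEq V] (huv : u ≠ v) (w : {x // x ≠ v}) :
    {y | (attachLeaf v u G).Adj w y}.ncard =
      {b | G.Adj w b}.ncard + if w.1 = u then 1 else 0 := by
  have himage : Subtype.val '' {b | G.Adj w b} = {y | (attachLeaf v u G).Adj w y} \ {v} := by
    ext y
    by_cases hy : y = v
    · simp [hy]
    · simpa [hy] using (attachLeaf_adj_val (u := u) (G := G) (a := w) (b := ⟨y, hy⟩)).symm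
  have hv : v ∈ {y | (attachLeaf v u G).Adj w y} ↔ w.1 = u := by
    rw [Set.mem_ofPred_eq, adj_comm, attachLeaf_adj_leaf_iff huv]
  rw [← Set.ncard_image_of_injective _ Subtype.val_injective, himage]
  split_ifs with hw
  · rw [Set.ncard_sdiff_singleton_add_one (hv.mpr hw)]
  · rw [Set.sdiff_singleton_eq_self (mt hv.mp hw), add_zero]

end SimpleGraph

open SimpleGraph Finset
open scoped Nat

section TreeRealizations

variable {V : Type*}

def treeRealizations (d : V → ℕ) : Set (SimpleGraph V) :=
  {G | G.IsTree ∧ ∀ x, {y | G.Adj x y}.ncard = d x}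

variable [Fintype V] {d : V → ℕ} {v u : V}

def IsTreeDegreeSeq (d : V → ℕ) : Prop :=
  (∀ x, 1 ≤ d x) ∧ ∑ x, d x = 2 * Fintype.card V - 2

lemma IsTreeDegreeSeq.sum_sub_one (hd : IsTreeDegreeSeq d) :
    ∑ x, (d x - 1) = Fintype.card V - 2 := by
  rw [sum_tsub_distrib _ fun x _ ↦ hd.1 x, hd.2, sum_const, card_univ, smul_eq_mul, mul_one]
  omega

lemma IsTreeDegreeSeq.exists_eq_one (hd : IsTreeDegreeSeq d) (hV : 2 ≤ Fintype.card V) :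
    ∃ v, d v = 1 := by
  have : ∑ x, (d x - 1) < ∑ _x : V, 1 := by simp [hd.sum_sub_one]; omega
  obtain ⟨v, -, hv⟩ := exists_lt_of_sum_lt this
  exact ⟨v, by have := hd.1 v; omega⟩

lemma IsTreeDegreeSeq.eq_one_of_card_eq_two (hd : IsTreeDegreeSeq d) (hV : Fintype.card V = 2)
    (x : V) : d x = 1 := by
  have := (sum_eq_zero_iff.mp (hV ▸ hd.sum_sub_one)) x (mem_univ x)
  have := hd.1 x
  omega

lemma top_mem_treeRealizations_of_card_eq_two (hd : IsTreeDegreeSeq d)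
    (hV : Fintype.card V = 2) : (⊤ : SimpleGraph V) ∈ treeRealizations d := by
  have : Nonempty V := Fintype.card_pos_iff.mp (by omega)
  refine ⟨⟨connected_top, IsAcyclic.of_card_le_two (by simp [ENat.card_eq_coe_fintype_card, hV])⟩,
    fun x ↦ ?_⟩
  have hcompl : {y | (⊤ : SimpleGraph V).Adj x y} = {x}ᶜ := by ext; simp [eq_comm]
  rw [hcompl, Set.ncard_compl, Set.ncard_singleton, Nat.card_eq_fintype_card, hV,
    hd.eq_one_of_card_eq_two hV]

lemma sum_ncard_adj_le_ncard (S : Set (SimpleGraph V))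
    (hS : ∀ G ∈ S, {y | G.Adj v y}.ncard = 1) :
    ∑ u, {G ∈ S | G.Adj v u}.ncard ≤ S.ncard := by
  have hdisj : Pairwise (Disjoint on fun u ↦ {G ∈ S | G.Adj v u}) := by
    intro u u' huu'
    refine Set.disjoint_left.mpr fun G ⟨hG, hu⟩ ⟨_, hu'⟩ ↦ huu' ?_
    obtain ⟨w, hw⟩ := Set.ncard_eq_one.mp (hS G hG)
    have hu : u ∈ ({w} : Set V) := hw ▸ hu
    have hu' : u' ∈ ({w} : Set V) := hw ▸ hu'
    exact hu.trans hu'.symm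
  rw [← finsum_eq_sum_of_fintype, ← Set.ncard_iUnion_of_finite (fun _ ↦ Set.toFinite _) hdisj]
  exact Set.ncard_le_ncard (Set.iUnion_subset fun u ↦ Set.sep_subset _ _)

variable [DecidableEq V]

/-- The degrees left after deleting the leaf `v` hanging from `u`. -/
def pruneLeaf (d : V → ℕ) (v u : V) (w : {x // x ≠ v}) : ℕ :=
  update d u (d u - 1) w

lemma card_subtype_ne (v : V) : Fintype.card {x // x ≠ v} = Fintype.card V - 1 :=
  Set.card_ne_eq v

lemma IsTreeDegreeSeq.pruneLeaf (hd : IsTreeDegreeSeq d) (huv : u ≠ v) (hdv : d v = 1)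
    (hdu : 2 ≤ d u) : IsTreeDegreeSeq (pruneLeaf d v u) := by
  refine ⟨fun w ↦ ?_, ?_⟩
  · rcases eq_or_ne w.1 u with h | h
    · simp only [_root_.pruneLeaf, h, update_self]; omega
    · simpa [_root_.pruneLeaf, update_of_ne h] using hd.1 w
  · have hsplit := Fintype.sum_eq_add_sum_subtype_ne (update d u (d u - 1)) v
    rw [sum_update_of_mem (mem_univ u), update_of_ne huv.symm, hdv] at hsplit
    have hsum := hd.2
    rw [← add_sum_erase _ _ (mem_univ u)] at hsum
    rw [card_subtype_ne]
    simp only [_root_.pruneLeaf, sdiff_singleton_eq_erase] at hsplit ⊢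
    omega

lemma prod_factorial_pruneLeaf (huv : u ≠ v) (hdv : d v = 1) (hdu : 2 ≤ d u) :
    (d u - 1) * ∏ w, (pruneLeaf d v u w - 1)! = ∏ x, (d x - 1)! := by
  have hupdate (x : V) :
      (update d u (d u - 1) x - 1)! = update (fun x ↦ (d x - 1)!) u (d u - 2)! x := by
    rcases eq_or_ne x u with rfl | hx
    · rw [update_self, update_self, Nat.sub_sub]
    · simp [update_of_ne hx]
  have hsplit := Fintype.prod_eq_mul_prod_subtype_ne (fun x ↦ (update d u (d u - 1) x - 1)!) v
  simp only [hupdate, prod_update_of_mem (mem_univ u), update_of_ne huv.symm, hdv,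
    sdiff_singleton_eq_erase] at hsplit
  simp only [pruneLeaf, hupdate, ← mul_prod_erase _ _ (mem_univ u)]
  rw [← Nat.mul_factorial_pred (n := d u - 1) (by omega), Nat.sub_sub, mul_assoc, hsplit]
  simp

lemma attachLeaf_mem_treeRealizations {G : SimpleGraph {x // x ≠ v}} (huv : u ≠ v)
    (hdv : d v = 1) (hdu : 1 ≤ d u) (hG : G ∈ treeRealizations (pruneLeaf d v u)) :
    attachLeaf v u G ∈ treeRealizations d := by
  refine ⟨hG.1.attachLeaf huv, fun x ↦ ?_⟩
  by_cases hx : x = v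
  · rw [hx, ncard_adj_attachLeaf_leaf huv, hdv]
  · rw [show x = (⟨x, hx⟩ : {x // x ≠ v}) from rfl, ncard_adj_attachLeaf huv, hG.2]
    rcases eq_or_ne x u with rfl | hxu
    · simp only [pruneLeaf, update_self, if_true]; omega
    · simp [pruneLeaf, hxu]

lemma mul_le_ncard_adj_mul_of_pruneLeaf (P : SimpleGraph V → Prop) {k : ℕ} (huv : u ≠ v)
    (hdv : d v = 1) (hdu : 2 ≤ d u)
    (hk : k ≤ {G ∈ treeRealizations (pruneLeaf d v u) | P (attachLeaf v u G)}.ncard *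
      ∏ w, (pruneLeaf d v u w - 1)!) :
    (d u - 1) * k ≤ {G ∈ treeRealizations d | G.Adj v u ∧ P G}.ncard * ∏ x, (d x - 1)! := by
  have hinj : {G ∈ treeRealizations (pruneLeaf d v u) | P (attachLeaf v u G)}.ncard ≤
      {G ∈ treeRealizations d | G.Adj v u ∧ P G}.ncard :=
    Set.ncard_le_ncard_of_injOn _
      (fun G hG ↦ ⟨attachLeaf_mem_treeRealizations huv hdv (by omega) hG.1,
        (attachLeaf_adj_leaf_iff huv).mpr rfl, hG.2⟩)
      attachLeaf_injective.injOn
  calc (d u - 1) * k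
      ≤ (d u - 1) * ({G ∈ treeRealizations (pruneLeaf d v u) | P (attachLeaf v u G)}.ncard *
          ∏ w, (pruneLeaf d v u w - 1)!) := Nat.mul_le_mul_left _ hk
    _ = {G ∈ treeRealizations (pruneLeaf d v u) | P (attachLeaf v u G)}.ncard *
          ∏ x, (d x - 1)! := by
        rw [mul_left_comm, prod_factorial_pruneLeaf huv hdv hdu]
    _ ≤ _ := Nat.mul_le_mul_right _ hinj

theorem factorial_le_ncard_treeRealizations_mul (hd : IsTreeDegreeSeq d)
    (hV : 2 ≤ Fintype.card V) :
    (Fintype.card V - 2)! ≤ (treeRealizations d).ncard * ∏ x, (d x - 1)! := by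
  obtain ⟨m, hm⟩ : ∃ m, Fintype.card V = m := ⟨_, rfl⟩
  induction m generalizing V with
  | zero => omega
  | succ m ih =>
    rcases (show m = 1 ∨ 2 ≤ m by omega) with rfl | hm2
    · have hpos : 0 < (treeRealizations d).ncard :=
        (Set.ncard_pos (Set.toFinite _)).mpr ⟨⊤, top_mem_treeRealizations_of_card_eq_two hd hm⟩
      simp [hm, hd.eq_one_of_card_eq_two hm]
      omega
    obtain ⟨v, hv⟩ := hd.exists_eq_one hV
    have hadj (u : V) : (d u - 1) * (m - 2)! ≤
        {G ∈ treeRealizations d | G.Adj v u}.ncard * ∏ x, (d x - 1)! := by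
      by_cases hdu : 2 ≤ d u
      · have huv : u ≠ v := by rintro rfl; omega
        have hcard : Fintype.card {x // x ≠ v} = m := by rw [card_subtype_ne]; omega
        have hpruned := ih (hd.pruneLeaf huv hv hdu) (by omega) hcard
        rw [hcard] at hpruned
        simpa using mul_le_ncard_adj_mul_of_pruneLeaf (fun _ ↦ True) huv hv hdu
          (by simpa using hpruned)
      · simp [show d u - 1 = 0 by omega]
    calc (Fintype.card V - 2)! = ∑ u, (d u - 1) * (m - 2)! := by
          rw [← sum_mul, hd.sum_sub_one, hm, ← Nat.mul_factorial_pred (by omega)]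
          rfl
      _ ≤ ∑ u, {G ∈ treeRealizations d | G.Adj v u}.ncard * ∏ x, (d x - 1)! :=
          sum_le_sum fun u _ ↦ hadj u
      _ ≤ (treeRealizations d).ncard * ∏ x, (d x - 1)! := by
          rw [← sum_mul]
          exact Nat.mul_le_mul_right _ (sum_ncard_adj_le_ncard _ fun G hG ↦ (hG.2 v).trans hv)

lemma prod_factorial_sub_one_eq_mul {a₁ a₂ : V} (ha : a₁ ≠ a₂) (hda₁ : 2 ≤ d a₁)
    (hda₂ : 2 ≤ d a₂) :
    ∏ x, (d x - 1)! = (d a₁ - 1) * (d a₂ - 1) *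
      ((d a₁ - 2)! * (d a₂ - 2)! * ∏ k ∈ (univ.erase a₁).erase a₂, (d k - 1)!) := by
  rw [← mul_prod_erase univ _ (mem_univ a₁),
    ← mul_prod_erase _ _ (mem_erase.mpr ⟨ha.symm, mem_univ a₂⟩),
    ← Nat.mul_factorial_pred (n := d a₁ - 1) (by omega),
    ← Nat.mul_factorial_pred (n := d a₂ - 1) (by omega), Nat.sub_sub, Nat.sub_sub]
  ring

theorem factorial_le_ncard_treeRealizations_adj_adj_mul (hd : IsTreeDegreeSeq d)
    {a₁ a₂ b₁ b₂ : V} (ha : a₁ ≠ a₂) (hb : b₁ ≠ b₂) (hda₁ : 2 ≤ d a₁) (hda₂ : 2 ≤ d a₂)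
    (hdb₁ : d b₁ = 1) (hdb₂ : d b₂ = 1) :
    (Fintype.card V - 4)! ≤ {G ∈ treeRealizations d | G.Adj b₁ a₁ ∧ G.Adj b₂ a₂}.ncard *
      ((d a₁ - 2)! * (d a₂ - 2)! * ∏ k ∈ (univ.erase a₁).erase a₂, (d k - 1)!) := by
  have ha₁b₁ : a₁ ≠ b₁ := by rintro rfl; omega
  have ha₁b₂ : a₁ ≠ b₂ := by rintro rfl; omega
  have ha₂b₁ : a₂ ≠ b₁ := by rintro rfl; omega
  have ha₂b₂ : a₂ ≠ b₂ := by rintro rfl; omega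
  let a₂' : {x // x ≠ b₁} := ⟨a₂, ha₂b₁⟩
  let b₂' : {x // x ≠ b₁} := ⟨b₂, hb.symm⟩
  have ha₂'b₂' : a₂' ≠ b₂' := fun h ↦ ha₂b₂ (congrArg Subtype.val h)
  have hd₁a₂ : pruneLeaf d b₁ a₁ a₂' = d a₂ := update_of_ne ha.symm _ _
  have hd₁b₂ : pruneLeaf d b₁ a₁ b₂' = 1 := (update_of_ne ha₁b₂.symm _ _).trans hdb₂
  have hd₂ := (hd.pruneLeaf ha₁b₁ hdb₁ hda₁).pruneLeaf ha₂'b₂' hd₁b₂ (hd₁a₂ ▸ hda₂)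
  have hcard : Fintype.card {w : {x // x ≠ b₁} // w ≠ b₂'} = Fintype.card V - 2 := by
    rw [card_subtype_ne, card_subtype_ne]
    omega
  have htwo : 2 ≤ Fintype.card {w : {x // x ≠ b₁} // w ≠ b₂'} :=
    Fintype.one_lt_card_iff.mpr ⟨⟨⟨a₁, ha₁b₁⟩, fun h ↦ ha₁b₂ (congrArg Subtype.val h)⟩,
      ⟨a₂', ha₂'b₂'⟩, fun h ↦ ha (congrArg (Subtype.val ∘ Subtype.val) h)⟩
  have hlift (G : SimpleGraph {x // x ≠ b₁}) :
      (attachLeaf b₁ a₁ G).Adj b₂ a₂ ↔ G.Adj b₂' a₂' :=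
    attachLeaf_adj_val (a := b₂') (b := a₂')
  have hleaf₂ := mul_le_ncard_adj_mul_of_pruneLeaf (fun _ ↦ True) ha₂'b₂' hd₁b₂ (hd₁a₂ ▸ hda₂)
    (by simpa only [Set.sep_true] using factorial_le_ncard_treeRealizations_mul hd₂ htwo)
  have hleaf₁ := mul_le_ncard_adj_mul_of_pruneLeaf (fun G ↦ G.Adj b₂ a₂) ha₁b₁ hdb₁ hda₁
    (by simpa only [and_true, hlift] using hleaf₂)
  rw [hcard, hd₁a₂, prod_factorial_sub_one_eq_mul ha hda₁ hda₂,
    show Fintype.card V - 2 - 2 = Fintype.card V - 4 by omega] at hleaf₁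
  have hpos : 0 < (d a₁ - 1) * (d a₂ - 1) := Nat.mul_pos (by omega) (by omega)
  exact Nat.le_of_mul_le_mul_left (by linarith) hpos

end TreeRealizations

theorem count_pairs_with_two_common_edges_general (n : ℕ) (D F : Fin n → ℕ)
    (hD : isTreeSeq D) (hF : isTreeSeq F) (hmin : ∀ i, min (D i) (F i) = 1)
    (i₁ i₂ j₁ j₂ : Fin n) (hi : i₁ ≠ i₂) (hj : j₁ ≠ j₂)
    (hDi₁ : 1 < D i₁) (hDi₂ : 1 < D i₂) (hFj₁ : 1 < F j₁) (hFj₂ : 1 < F j₂) :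
    Nat.factorial (n - 4) * Nat.factorial (n - 4) ≤
      {P : SimpleGraph (Fin n) × SimpleGraph (Fin n) |
          P.1.IsTree ∧ realizes P.1 D ∧ P.2.IsTree ∧ realizes P.2 F ∧
          P.1.Adj i₁ j₁ ∧ P.1.Adj i₂ j₂ ∧ P.2.Adj i₁ j₁ ∧ P.2.Adj i₂ j₂}.ncard *
        ((Nat.factorial (D i₁ - 2) * Nat.factorial (D i₂ - 2) *
            ∏ k ∈ (Finset.univ.erase i₁).erase i₂, Nat.factorial (D k - 1)) *
         (Nat.factorial (F j₁ - 2) * Nat.factorial (F j₂ - 2) *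
            ∏ k ∈ (Finset.univ.erase j₁).erase j₂, Nat.factorial (F k - 1))) := by
  have hDj₁ : D j₁ = 1 := by have := hmin j₁; omega
  have hDj₂ : D j₂ = 1 := by have := hmin j₂; omega
  have hFi₁ : F i₁ = 1 := by have := hmin i₁; omega
  have hFi₂ : F i₂ = 1 := by have := hmin i₂; omega
  have hD' : IsTreeDegreeSeq D := ⟨hD.1, by simpa using hD.2⟩
  have hF' : IsTreeDegreeSeq F := ⟨hF.1, by simpa using hF.2⟩
  have hpairs : {P : SimpleGraph (Fin n) × SimpleGraph (Fin n) |
      P.1.IsTree ∧ realizes P.1 D ∧ P.2.IsTree ∧ realizes P.2 F ∧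
      P.1.Adj i₁ j₁ ∧ P.1.Adj i₂ j₂ ∧ P.2.Adj i₁ j₁ ∧ P.2.Adj i₂ j₂} =
      {G ∈ treeRealizations D | G.Adj j₁ i₁ ∧ G.Adj j₂ i₂} ×ˢ
        {G ∈ treeRealizations F | G.Adj i₁ j₁ ∧ G.Adj i₂ j₂} := by
    ext ⟨G, H⟩
    simp only [treeRealizations, realizes, Set.mem_prod, Set.mem_ofPred_eq, adj_comm G j₁,
      adj_comm G j₂]
    tauto
  rw [hpairs, Set.ncard_prod, mul_mul_mul_comm]
  simpa using Nat.mul_le_mul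
    (factorial_le_ncard_treeRealizations_adj_adj_mul hD' hi hj hDi₁ hDi₂ hDj₁ hDj₂)
    (factorial_le_ncard_treeRealizations_adj_adj_mul hF' hj hi hFj₁ hFj₂ hFi₁ hFi₂)

theorem count_pairs_with_two_common_edges (n : ℕ) (D F : Fin n → ℕ)
    (hD : isTreeSeq D) (hF : isTreeSeq F) (hmin : ∀ i, min (D i) (F i) = 1)
    (hDs : ∀ i, D i ≠ n - 1) (hFs : ∀ i, F i ≠ n - 1)
    (i₁ i₂ j₁ j₂ : Fin n) (hi : i₁ ≠ i₂) (hj : j₁ ≠ j₂)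
    (hDi₁ : 1 < D i₁) (hDi₂ : 1 < D i₂) (hFj₁ : 1 < F j₁) (hFj₂ : 1 < F j₂) :
    Nat.factorial (n - 4) * Nat.factorial (n - 4) ≤
      {P : SimpleGraph (Fin n) × SimpleGraph (Fin n) |
          P.1.IsTree ∧ realizes P.1 D ∧ P.2.IsTree ∧ realizes P.2 F ∧
          P.1.Adj i₁ j₁ ∧ P.1.Adj i₂ j₂ ∧ P.2.Adj i₁ j₁ ∧ P.2.Adj i₂ j₂}.ncard *
        ((Nat.factorial (D i₁ - 2) * Nat.factorial (D i₂ - 2) *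
            ∏ k ∈ (Finset.univ.erase i₁).erase i₂, Nat.factorial (D k - 1)) *
         (Nat.factorial (F j₁ - 2) * Nat.factorial (F j₂ - 2) *
            ∏ k ∈ (Finset.univ.erase j₁).erase j₂, Nat.factorial (F k - 1))) :=
  count_pairs_with_two_common_edges_general n D F hD hF hmin i₁ i₂ j₁ j₂ hi hj hDi₁ hDi₂ hFj₁ hFj₂
end
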